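/- Let M be a Hölder continuous function on Σ_A taking values in the set of d×d matrices with all entries positive, fix q ∈ ℝ, and let μ_q be the Gibbs measure for M and q, viewed as a Borel probability measure on Σ. For a probability measure η on Σ, define its L^t-spectrum τ_η(t) = liminf_{n→∞} ( log Σ_{I∈Σ_n, η([I])≠0} η([I])^t ) / ( log m^{−n} ). Then for every t ∈ ℝ: τ_{μ_q}(t) = ( t·P(q) − P(qt) ) / log m. -/

import Mathlib

open Filter MeasureTheory
open scoped Classical BigOperators Topology ENNReal

/-- The left shift on `Σ = {1,…,m}^ℕ`, modelled as `ℕ → Fin m`. -/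
def shift {m : ℕ} (x : ℕ → Fin m) : ℕ → Fin m := fun k => x (k + 1)

/-- The subshift of finite type `Σ_A` determined by a 0-1 matrix `A`. -/
def SigmaA {m : ℕ} (A : Matrix (Fin m) (Fin m) ℕ) : Set (ℕ → Fin m) :=
  {x | ∀ k : ℕ, A (x k) (x (k + 1)) = 1}

/-- Admissibility of a word `J ∈ Σ_{A,n}` (a word of length `n` over `{1,…,m}`). -/
def Adm {m : ℕ} (A : Matrix (Fin m) (Fin m) ℕ) {n : ℕ} (J : Fin n → Fin m) : Prop :=
  ∀ (i : ℕ) (h : i + 1 < n), A (J ⟨i, Nat.lt_of_succ_lt h⟩) (J ⟨i + 1, h⟩) = 1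

/-- The (finite) set `Σ_{A,n}` of admissible words of length `n`. -/
noncomputable def admWords {m : ℕ} (A : Matrix (Fin m) (Fin m) ℕ) (n : ℕ) :
    Finset (Fin n → Fin m) :=
  Finset.univ.filter fun J => Adm A J

/-- The cylinder set `[J] ⊆ Σ_A` of a word `J`. -/
def cylinder {m : ℕ} (A : Matrix (Fin m) (Fin m) ℕ) {n : ℕ} (J : Fin n → Fin m) :
    Set (ℕ → Fin m) :=
  {x | x ∈ SigmaA A ∧ ∀ i : Fin n, x (i : ℕ) = J i}

/-- `‖B‖ = 1ᵗ B 1`, the sum of all entries of `B`. -/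
def matNorm {d : ℕ} (B : Matrix (Fin d) (Fin d) ℝ) : ℝ := ∑ i, ∑ j, B i j

/-- The product `M(x) M(σx) ⋯ M(σ^{n-1}x)`. -/
noncomputable def Mprod {m d : ℕ} (M : (ℕ → Fin m) → Matrix (Fin d) (Fin d) ℝ)
    (x : ℕ → Fin m) (n : ℕ) : Matrix (Fin d) (Fin d) ℝ :=
  (((List.range n).map fun i => M (shift^[i] x))).prod

/-- `s_n(J,q) = sup_{x ∈ [J]} ‖M(x)⋯M(σ^{n-1}x)‖^q`. -/
noncomputable def sWord {m d : ℕ} (A : Matrix (Fin m) (Fin m) ℕ)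
    (M : (ℕ → Fin m) → Matrix (Fin d) (Fin d) ℝ) (q : ℝ) {n : ℕ} (J : Fin n → Fin m) : ℝ :=
  sSup ((fun x => matNorm (Mprod M x n) ^ q) '' cylinder A J)

/-- `s_n(q) = Σ_{J ∈ Σ_{A,n}} s_n(J,q)`. -/
noncomputable def sSum {m d : ℕ} (A : Matrix (Fin m) (Fin m) ℕ)
    (M : (ℕ → Fin m) → Matrix (Fin d) (Fin d) ℝ) (q : ℝ) (n : ℕ) : ℝ :=
  ∑ J ∈ admWords A n, sWord A M q J

/-- `M` is Hölder continuous on `Σ_A` with respect to the metric `d(x,y) = m^{-n(x,y)}`: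
entrywise, `|M(x)_{ij} - M(y)_{ij}| ≤ C (m^{-α})^n` whenever `x, y` agree on the first
`n` coordinates. -/
def HolderM {m d : ℕ} (A : Matrix (Fin m) (Fin m) ℕ)
    (M : (ℕ → Fin m) → Matrix (Fin d) (Fin d) ℝ) : Prop :=
  ∃ C > (0:ℝ), ∃ a : ℝ, 0 < a ∧ a < 1 ∧
    ∀ x ∈ SigmaA A, ∀ y ∈ SigmaA A, ∀ n : ℕ, (∀ k < n, x k = y k) →
      ∀ i j, |M x i j - M y i j| ≤ C * a ^ n

/-- `A` is a 0-1 matrix. -/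
def ZeroOne {m : ℕ} (A : Matrix (Fin m) (Fin m) ℕ) : Prop :=
  ∀ i j, A i j = 0 ∨ A i j = 1

/-- `A` is primitive: some power of `A` has all entries positive. -/
def Primitive {m : ℕ} (A : Matrix (Fin m) (Fin m) ℕ) : Prop :=
  ∃ p : ℕ, 1 ≤ p ∧ ∀ i j, 0 < (A ^ p) i j

/-- `M` takes values in the positive `d × d` matrices (on `Σ_A`). -/
def PosM {m d : ℕ} (A : Matrix (Fin m) (Fin m) ℕ)
    (M : (ℕ → Fin m) → Matrix (Fin d) (Fin d) ℝ) : Prop :=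
  ∀ x ∈ SigmaA A, ∀ i j, 0 < M x i j

/-- The cylinder set `[J] ⊆ Σ` of a word `J` (full shift, no admissibility constraint). -/
def cylFull {m : ℕ} {n : ℕ} (J : Fin n → Fin m) : Set (ℕ → Fin m) :=
  {x | ∀ i : Fin n, x (i : ℕ) = J i}

/-- The `L^t`-spectrum `τ_η(t)` of a measure `η` on `Σ`. -/
noncomputable def Lspectrum {m : ℕ} (η : Measure (ℕ → Fin m)) (t : ℝ) : ℝ :=
  Filter.liminf (fun n : ℕ =>
    Real.log (∑ I ∈ Finset.univ.filter (fun I : Fin n → Fin m => η (cylFull I) ≠ 0),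
        ((η (cylFull I)).toReal) ^ t) /
      Real.log ((m : ℝ) ^ (-(n : ℝ)))) Filter.atTop

-- basic lemmas

lemma shift_mem_SigmaA {m : ℕ} {A : Matrix (Fin m) (Fin m) ℕ} {x : ℕ → Fin m}
    (hx : x ∈ SigmaA A) : shift x ∈ SigmaA A := fun k => hx (k + 1)

lemma iterate_shift_mem_SigmaA {m : ℕ} {A : Matrix (Fin m) (Fin m) ℕ} {x : ℕ → Fin m}
    (hx : x ∈ SigmaA A) (i : ℕ) : shift^[i] x ∈ SigmaA A := by
  induction i with
  | zero => exact hx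
  | succ i ih => rw [Function.iterate_succ_apply']; exact shift_mem_SigmaA ih

lemma Mprod_succ {m d : ℕ} (M : (ℕ → Fin m) → Matrix (Fin d) (Fin d) ℝ)
    (x : ℕ → Fin m) (n : ℕ) :
    Mprod M x (n + 1) = Mprod M x n * M (shift^[n] x) := by
  simp [Mprod, List.range_succ]

lemma Mprod_pos {m d : ℕ} {A : Matrix (Fin m) (Fin m) ℕ}
    {M : (ℕ → Fin m) → Matrix (Fin d) (Fin d) ℝ} (hd : 1 ≤ d)
    (hpos : PosM A M) {x : ℕ → Fin m} (hx : x ∈ SigmaA A) :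
    ∀ n, 1 ≤ n → ∀ i j, 0 < Mprod M x n i j := by
  have hne : (Finset.univ : Finset (Fin d)).Nonempty := ⟨⟨0, hd⟩, Finset.mem_univ _⟩
  intro n hn
  induction n with
  | zero => omega
  | succ n ih =>
    intro i j
    rcases Nat.eq_or_lt_of_le hn with h1 | h1
    · have : Mprod M x 1 = M x := by
        simp only [Mprod]; rw [List.range_succ]; simp
      rw [← h1, this]
      exact hpos x hx i j
    · have hn1 : 1 ≤ n := by omega
      rw [Mprod_succ, Matrix.mul_apply]
      exact Finset.sum_pos (fun k _ => mul_pos (ih hn1 i k)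
        (hpos _ (iterate_shift_mem_SigmaA hx n) k j)) hne

lemma matNorm_pos {d : ℕ} (hd : 1 ≤ d) {B : Matrix (Fin d) (Fin d) ℝ}
    (hB : ∀ i j, 0 < B i j) : 0 < matNorm B := by
  have hne : (Finset.univ : Finset (Fin d)).Nonempty := ⟨⟨0, hd⟩, Finset.mem_univ _⟩
  exact Finset.sum_pos (fun i _ => Finset.sum_pos (fun j _ => hB i j) hne) hne

-- next-step function from primitivity
lemma exists_next {m : ℕ} {A : Matrix (Fin m) (Fin m) ℕ} (hm : 2 ≤ m)
    (hA01 : ZeroOne A) (hAprim : Primitive A) :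
    ∀ j : Fin m, ∃ j' : Fin m, A j j' = 1 := by
  obtain ⟨p, hp1, hp⟩ := hAprim
  intro j
  have hk : Fin m := ⟨0, by omega⟩
  have hpos : 0 < (A ^ p) j hk := hp j hk
  have hAp : A ^ p = A * A ^ (p - 1) := by
    conv_lhs => rw [show p = 1 + (p - 1) by omega]
    rw [pow_add, pow_one]
  rw [hAp, Matrix.mul_apply] at hpos
  by_contra hcon
  push_neg at hcon
  have : ∀ j' ∈ (Finset.univ : Finset (Fin m)), A j j' * (A ^ (p-1)) j' hk = 0 := by
    intro j' _
    rcases hA01 j j' with h | h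
    · rw [h, zero_mul]
    · exact absurd h (hcon j')
  rw [Finset.sum_eq_zero this] at hpos
  omega

-- extension of an admissible word to a point of the cylinder
lemma cylinder_nonempty {m : ℕ} {A : Matrix (Fin m) (Fin m) ℕ} (hm : 2 ≤ m)
    (hA01 : ZeroOne A) (hAprim : Primitive A) {n : ℕ} (hn : 1 ≤ n)
    {J : Fin n → Fin m} (hJ : Adm A J) : ∃ x, x ∈ cylinder A J := by
  obtain g : { g : Fin m → Fin m // ∀ j, A j (g j) = 1 } :=
    ⟨fun j => (exists_next hm hA01 hAprim j).choose,
     fun j => (exists_next hm hA01 hAprim j).choose_spec⟩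
  obtain ⟨g, hg⟩ := g
  have hn1 : n - 1 < n := by omega
  set z : Fin m := J ⟨n - 1, hn1⟩ with hz
  refine ⟨fun k => if h : k < n then J ⟨k, h⟩ else g^[k + 1 - n] z, ?_, ?_⟩
  · intro k
    by_cases h1 : k + 1 < n
    · have hk : k < n := by omega
      simp only [dif_pos h1, dif_pos hk]
      exact hJ k h1
    · by_cases h2 : k < n
      · have hkn : k = n - 1 := by omega
        have hk1 : ¬ (k + 1 < n) := h1
        simp only [dif_pos h2, dif_neg hk1]
        have : k + 1 + 1 - n = 1 := by omega
        rw [this]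
        have hJk : J ⟨k, h2⟩ = z := by
          rw [hz]; congr 1; exact Fin.ext hkn
        rw [hJk]
        simp [Function.iterate_one, hg z]
      · simp only [dif_neg h2, dif_neg (show ¬ (k + 1 < n) by omega)]
        have : k + 1 + 1 - n = (k + 1 - n) + 1 := by omega
        rw [this, Function.iterate_succ_apply']
        exact hg _
  · intro i
    have : (i : ℕ) < n := i.isLt
    simp only [dif_pos this]

lemma measurableSet_SigmaA {m : ℕ} (A : Matrix (Fin m) (Fin m) ℕ) :
    MeasurableSet (SigmaA A) := by
  have : SigmaA A = ⋂ k : ℕ, (fun x : ℕ → Fin m => (x k, x (k+1))) ⁻¹' {p | A p.1 p.2 = 1} := by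
    ext x; simp [SigmaA, Set.mem_iInter]
  rw [this]
  exact MeasurableSet.iInter fun k =>
    ((measurable_pi_apply k).prodMk (measurable_pi_apply (k+1))) .of_discrete

lemma cylinder_eq_inter {m : ℕ} (A : Matrix (Fin m) (Fin m) ℕ) {n : ℕ} (J : Fin n → Fin m) :
    cylinder A J = cylFull J ∩ SigmaA A := by
  ext x; constructor
  · rintro ⟨h1, h2⟩; exact ⟨h2, h1⟩
  · rintro ⟨h1, h2⟩; exact ⟨h2, h1⟩

lemma measure_cylFull_eq {m : ℕ} {A : Matrix (Fin m) (Fin m) ℕ}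
    {μ : Measure (ℕ → Fin m)} [IsProbabilityMeasure μ] (hsupp : μ (SigmaA A) = 1)
    {n : ℕ} (J : Fin n → Fin m) : μ (cylFull J) = μ (cylinder A J) := by
  have h0 : μ (SigmaA A)ᶜ = 0 := by
    rw [measure_compl (measurableSet_SigmaA A) (measure_ne_top μ _), hsupp, measure_univ]
    simp
  apply le_antisymm
  · calc μ (cylFull J) ≤ μ (cylinder A J ∪ (SigmaA A)ᶜ) := by
          apply measure_mono
          intro x hx
          by_cases h : x ∈ SigmaA A
          · exact Or.inl ⟨h, hx⟩
          · exact Or.inr h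
      _ ≤ μ (cylinder A J) + μ (SigmaA A)ᶜ := measure_union_le _ _
      _ = μ (cylinder A J) := by rw [h0, add_zero]
  · apply measure_mono
    intro x hx
    exact hx.2

lemma adm_of_cylinder_nonempty {m : ℕ} {A : Matrix (Fin m) (Fin m) ℕ}
    {n : ℕ} {J : Fin n → Fin m} {x : ℕ → Fin m} (hx : x ∈ cylinder A J) : Adm A J := by
  intro i h
  have h1 : x i = J ⟨i, Nat.lt_of_succ_lt h⟩ := hx.2 ⟨i, Nat.lt_of_succ_lt h⟩
  have h2 : x (i+1) = J ⟨i+1, h⟩ := hx.2 ⟨i+1, h⟩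
  rw [← h1, ← h2]
  exact hx.1 i

lemma admWords_nonempty {m : ℕ} {A : Matrix (Fin m) (Fin m) ℕ} (hm : 2 ≤ m)
    (hA01 : ZeroOne A) (hAprim : Primitive A) (n : ℕ) (hn : 1 ≤ n) :
    (admWords A n).Nonempty := by
  obtain ⟨x, hx⟩ : ∃ x, x ∈ cylinder A (fun _ : Fin 1 => (⟨0, by omega⟩ : Fin m)) := by
    apply cylinder_nonempty hm hA01 hAprim le_rfl
    intro i h; omega
  refine ⟨fun i : Fin n => x i, ?_⟩
  rw [admWords, Finset.mem_filter]
  refine ⟨Finset.mem_univ _, fun i h => hx.1 i⟩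

/-- (2.7): the `L^t`-spectrum of the Gibbs measure `μ_q` equals
`(t P(q) - P(qt)) / log m`. -/
theorem Lspectrum_gibbs
    (m d : ℕ) (hm : 2 ≤ m) (hd : 1 ≤ d)
    (A : Matrix (Fin m) (Fin m) ℕ) (hA01 : ZeroOne A) (hAprim : Primitive A)
    (M : (ℕ → Fin m) → Matrix (Fin d) (Fin d) ℝ)
    (hpos : PosM A M) (hHolder : HolderM A M)
    (P : ℝ → ℝ)
    (hP : ∀ s : ℝ,
      Tendsto (fun n : ℕ => (1 / (n : ℝ)) * Real.log (sSum A M s n)) atTop (𝓝 (P s)))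
    (q : ℝ) (μ : Measure (ℕ → Fin m))
    (hprob : IsProbabilityMeasure μ) (hsupp : μ (SigmaA A) = 1)
    (hinv : MeasurePreserving shift μ μ) (herg : Ergodic shift μ)
    (hGibbs : ∃ C₁ > (0:ℝ), ∃ C₂ > (0:ℝ), ∀ n : ℕ, 1 ≤ n → ∀ J : Fin n → Fin m, Adm A J →
      ∀ x ∈ cylinder A J,
        C₁ ≤ (μ (cylinder A J)).toReal /
            (Real.exp (-(n : ℝ) * P q) * matNorm (Mprod M x n) ^ q) ∧
        (μ (cylinder A J)).toReal /
            (Real.exp (-(n : ℝ) * P q) * matNorm (Mprod M x n) ^ q) ≤ C₂) :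
    ∀ t : ℝ, Lspectrum μ t = (t * P q - P (q * t)) / Real.log m := by
  intro t
  obtain ⟨C₁, hC₁, C₂, hC₂, hG⟩ := hGibbs
  set K : ℝ := C₂ / C₁ with hKdef
  have hK : 0 < K := div_pos hC₂ hC₁
  set Kt : ℝ := max 1 (K ^ |t|) with hKtdef
  have hKt1 : (1:ℝ) ≤ Kt := le_max_left _ _
  have hKt : 0 < Kt := lt_of_lt_of_le one_pos hKt1
  -- matNorm positivity on cylinders
  have hmn : ∀ n : ℕ, 1 ≤ n → ∀ x ∈ SigmaA A, 0 < matNorm (Mprod M x n) :=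
    fun n hn x hx => matNorm_pos hd (Mprod_pos hd hpos hx n hn)
  -- two-sided Gibbs bounds
  have hGB : ∀ n : ℕ, 1 ≤ n → ∀ J : Fin n → Fin m, Adm A J → ∀ x ∈ cylinder A J,
      C₁ * (Real.exp (-(n:ℝ) * P q) * matNorm (Mprod M x n) ^ q) ≤ (μ (cylinder A J)).toReal ∧
      (μ (cylinder A J)).toReal ≤ C₂ * (Real.exp (-(n:ℝ) * P q) * matNorm (Mprod M x n) ^ q) := by
    intro n hn J hJ x hx
    have hD : 0 < Real.exp (-(n:ℝ) * P q) * matNorm (Mprod M x n) ^ q :=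
      mul_pos (Real.exp_pos _) (Real.rpow_pos_of_pos (hmn n hn x hx.1) q)
    obtain ⟨h1, h2⟩ := hG n hn J hJ x hx
    exact ⟨(le_div_iff₀ hD).mp h1, (div_le_iff₀ hD).mp h2⟩
  -- bounded distortion
  have hdist : ∀ n : ℕ, 1 ≤ n → ∀ J : Fin n → Fin m, Adm A J →
      ∀ x ∈ cylinder A J, ∀ y ∈ cylinder A J,
      matNorm (Mprod M y n) ^ (q * t) ≤ Kt * matNorm (Mprod M x n) ^ (q * t) := by
    intro n hn J hJ x hx y hy
    have ha : 0 < matNorm (Mprod M x n) := hmn n hn x hx.1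
    have hb : 0 < matNorm (Mprod M y n) := hmn n hn y hy.1
    set a := matNorm (Mprod M x n)
    set b := matNorm (Mprod M y n)
    have hE : (0:ℝ) < Real.exp (-(n:ℝ) * P q) := Real.exp_pos _
    set E := Real.exp (-(n:ℝ) * P q) with hEdef
    obtain ⟨hx1, hx2⟩ := hGB n hn J hJ x hx
    obtain ⟨hy1, hy2⟩ := hGB n hn J hJ y hy
    have hcancel : ∀ u v : ℝ, C₁ * (E * u) ≤ C₂ * (E * v) → u ≤ K * v := by
      intro u v h
      have h4 : C₁ * u ≤ C₂ * v := by
        have h5 := mul_le_mul_of_nonneg_left h (le_of_lt (inv_pos.mpr hE))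
        calc C₁ * u = E⁻¹ * (C₁ * (E * u)) := by field_simp
          _ ≤ E⁻¹ * (C₂ * (E * v)) := h5
          _ = C₂ * v := by field_simp
      rw [hKdef, div_mul_eq_mul_div, le_div_iff₀ hC₁]
      nlinarith
    have hq1 : b ^ q ≤ K * a ^ q := hcancel _ _ (le_trans hy1 hx2)
    have hq2 : a ^ q ≤ K * b ^ q := hcancel _ _ (le_trans hx1 hy2)
    have hu : 0 < b ^ q := Real.rpow_pos_of_pos hb q
    have hv : 0 < a ^ q := Real.rpow_pos_of_pos ha q
    rw [Real.rpow_mul hb.le, Real.rpow_mul ha.le]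
    rcases le_or_gt 0 t with ht | ht
    · have h6 : (b ^ q) ^ t ≤ (K * a ^ q) ^ t := Real.rpow_le_rpow hu.le hq1 ht
      rw [Real.mul_rpow hK.le hv.le] at h6
      have h7 : K ^ t ≤ Kt := by
        rw [hKtdef, abs_of_nonneg ht]; exact le_max_right _ _
      calc (b ^ q) ^ t ≤ K ^ t * (a ^ q) ^ t := h6
        _ ≤ Kt * (a ^ q) ^ t :=
          mul_le_mul_of_nonneg_right h7 (Real.rpow_nonneg hv.le t)
    · have h5 : K⁻¹ * (a ^ q) ≤ b ^ q := by
        rw [inv_mul_le_iff₀ hK]; exact hq2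
      have h6 : (b ^ q) ^ t ≤ (K⁻¹ * a ^ q) ^ t :=
        Real.rpow_le_rpow_of_nonpos (by positivity) h5 ht.le
      have h7 : (K⁻¹ * a ^ q) ^ t = K ^ (-t) * (a ^ q) ^ t := by
        rw [Real.mul_rpow (by positivity) hv.le, Real.inv_rpow hK.le, ← Real.rpow_neg hK.le]
      have h8 : K ^ (-t) ≤ Kt := by
        rw [hKtdef, abs_of_neg ht]; exact le_max_right _ _
      calc (b ^ q) ^ t ≤ K ^ (-t) * (a ^ q) ^ t := by rw [← h7]; exact h6
        _ ≤ Kt * (a ^ q) ^ t :=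
          mul_le_mul_of_nonneg_right h8 (Real.rpow_nonneg hv.le t)
  -- sWord bounds
  have hsW : ∀ n : ℕ, 1 ≤ n → ∀ J : Fin n → Fin m, Adm A J → ∀ x ∈ cylinder A J,
      matNorm (Mprod M x n) ^ (q * t) ≤ sWord A M (q * t) J ∧
      sWord A M (q * t) J ≤ Kt * matNorm (Mprod M x n) ^ (q * t) := by
    intro n hn J hJ x hx
    have hbdd : ∀ z ∈ (fun y => matNorm (Mprod M y n) ^ (q * t)) '' cylinder A J,
        z ≤ Kt * matNorm (Mprod M x n) ^ (q * t) := by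
      rintro z ⟨y, hy, rfl⟩
      exact hdist n hn J hJ x hx y hy
    constructor
    · exact le_csSup ⟨_, hbdd⟩ ⟨x, hx, rfl⟩
    · exact csSup_le ⟨_, ⟨x, hx, rfl⟩⟩ hbdd
  -- per-word term bounds
  set c₁ : ℝ := min (C₁ ^ t) (C₂ ^ t) with hc₁def
  set c₂ : ℝ := max (C₁ ^ t) (C₂ ^ t) with hc₂def
  have hc₁ : 0 < c₁ := lt_min (Real.rpow_pos_of_pos hC₁ t) (Real.rpow_pos_of_pos hC₂ t)
  have hc₂ : 0 < c₂ := lt_of_lt_of_le hc₁ (min_le_max)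
  have hterm : ∀ n : ℕ, 1 ≤ n → ∀ J : Fin n → Fin m, Adm A J →
      c₁ * Kt⁻¹ * (Real.exp (-(n:ℝ) * P q) ^ t * sWord A M (q * t) J) ≤
        (μ (cylFull J)).toReal ^ t ∧
      (μ (cylFull J)).toReal ^ t ≤ c₂ * (Real.exp (-(n:ℝ) * P q) ^ t * sWord A M (q * t) J) := by
    intro n hn J hJ
    obtain ⟨x, hx⟩ := cylinder_nonempty hm hA01 hAprim hn hJ
    have ha : 0 < matNorm (Mprod M x n) := hmn n hn x hx.1
    set a := matNorm (Mprod M x n) with hadef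
    have hE : (0:ℝ) < Real.exp (-(n:ℝ) * P q) := Real.exp_pos _
    set E := Real.exp (-(n:ℝ) * P q) with hEdef
    obtain ⟨hg1, hg2⟩ := hGB n hn J hJ x hx
    have hmuc : (μ (cylFull J)).toReal = (μ (cylinder A J)).toReal := by
      rw [measure_cylFull_eq hsupp]
    rw [hmuc]
    set μt := (μ (cylinder A J)).toReal with hμtdef
    have hμt : 0 < μt := lt_of_lt_of_le (by positivity) hg1
    have hexp : ∀ C : ℝ, 0 < C → (C * (E * a ^ q)) ^ t = C ^ t * (E ^ t * a ^ (q * t)) := by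
      intro C hC
      rw [Real.mul_rpow hC.le (by positivity), Real.mul_rpow hE.le (by positivity),
        Real.rpow_mul ha.le]
    obtain ⟨hw1, hw2⟩ := hsW n hn J hJ x hx
    have hmid : c₁ * (E ^ t * a ^ (q * t)) ≤ μt ^ t ∧
        μt ^ t ≤ c₂ * (E ^ t * a ^ (q * t)) := by
      rcases le_or_gt 0 t with ht | ht
      · constructor
        · calc c₁ * (E ^ t * a ^ (q * t)) ≤ C₁ ^ t * (E ^ t * a ^ (q * t)) :=
              mul_le_mul_of_nonneg_right (min_le_left _ _) (by positivity)
            _ = (C₁ * (E * a ^ q)) ^ t := (hexp C₁ hC₁).symm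
            _ ≤ μt ^ t := Real.rpow_le_rpow (by positivity) hg1 ht
        · calc μt ^ t ≤ (C₂ * (E * a ^ q)) ^ t := Real.rpow_le_rpow hμt.le hg2 ht
            _ = C₂ ^ t * (E ^ t * a ^ (q * t)) := hexp C₂ hC₂
            _ ≤ c₂ * (E ^ t * a ^ (q * t)) :=
              mul_le_mul_of_nonneg_right (le_max_right _ _) (by positivity)
      · constructor
        · calc c₁ * (E ^ t * a ^ (q * t)) ≤ C₂ ^ t * (E ^ t * a ^ (q * t)) :=
              mul_le_mul_of_nonneg_right (min_le_right _ _) (by positivity)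
            _ = (C₂ * (E * a ^ q)) ^ t := (hexp C₂ hC₂).symm
            _ ≤ μt ^ t := Real.rpow_le_rpow_of_nonpos hμt hg2 ht.le
        · calc μt ^ t ≤ (C₁ * (E * a ^ q)) ^ t :=
              Real.rpow_le_rpow_of_nonpos (by positivity) hg1 ht.le
            _ = C₁ ^ t * (E ^ t * a ^ (q * t)) := hexp C₁ hC₁
            _ ≤ c₂ * (E ^ t * a ^ (q * t)) :=
              mul_le_mul_of_nonneg_right (le_max_left _ _) (by positivity)
    constructor
    · calc c₁ * Kt⁻¹ * (E ^ t * sWord A M (q * t) J)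
          ≤ c₁ * Kt⁻¹ * (E ^ t * (Kt * a ^ (q * t))) := by
            apply mul_le_mul_of_nonneg_left (mul_le_mul_of_nonneg_left hw2 (by positivity))
            positivity
        _ = c₁ * (E ^ t * a ^ (q * t)) := by
            field_simp
        _ ≤ μt ^ t := hmid.1
    · calc μt ^ t ≤ c₂ * (E ^ t * a ^ (q * t)) := hmid.2
        _ ≤ c₂ * (E ^ t * sWord A M (q * t) J) := by
            apply mul_le_mul_of_nonneg_left (mul_le_mul_of_nonneg_left hw1 (by positivity))
            exact hc₂.le
  -- the support of the sum in the L-spectrum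
  have hfilter : ∀ n : ℕ, 1 ≤ n →
      (Finset.univ.filter fun I : Fin n → Fin m => μ (cylFull I) ≠ 0) = admWords A n := by
    intro n hn
    ext I
    simp only [Finset.mem_filter, Finset.mem_univ, true_and, admWords]
    constructor
    · intro hne
      rw [measure_cylFull_eq hsupp] at hne
      have hcne : (cylinder A I).Nonempty := by
        rw [Set.nonempty_iff_ne_empty]
        intro h
        exact hne (by rw [h]; exact measure_empty)
      obtain ⟨x, hx⟩ := hcne
      exact adm_of_cylinder_nonempty hx
    · intro hadm
      obtain ⟨x, hx⟩ := cylinder_nonempty hm hA01 hAprim hn hadm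
      have hpos' : 0 < (μ (cylinder A I)).toReal :=
        lt_of_lt_of_le (mul_pos hC₁ (mul_pos (Real.exp_pos _)
          (Real.rpow_pos_of_pos (hmn n hn x hx.1) q))) (hGB n hn I hadm x hx).1
      rw [measure_cylFull_eq hsupp]
      intro h0
      rw [h0] at hpos'
      simp at hpos'
  -- positivity of s_n(qt)
  have hWpos : ∀ n : ℕ, 1 ≤ n → 0 < sSum A M (q * t) n := by
    intro n hn
    apply Finset.sum_pos ?_ (admWords_nonempty hm hA01 hAprim n hn)
    intro J hJm
    have hadm : Adm A J := by
      have := Finset.mem_filter.mp hJm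
      exact this.2
    obtain ⟨x, hx⟩ := cylinder_nonempty hm hA01 hAprim hn hadm
    exact lt_of_lt_of_le (Real.rpow_pos_of_pos (hmn n hn x hx.1) _) (hsW n hn J hadm x hx).1
  -- sum bounds
  have hTbounds : ∀ n : ℕ, 1 ≤ n →
      c₁ * Kt⁻¹ * (Real.exp (-(n:ℝ) * P q) ^ t * sSum A M (q * t) n) ≤
        (∑ I ∈ Finset.univ.filter (fun I : Fin n → Fin m => μ (cylFull I) ≠ 0),
          ((μ (cylFull I)).toReal) ^ t) ∧
      (∑ I ∈ Finset.univ.filter (fun I : Fin n → Fin m => μ (cylFull I) ≠ 0),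
          ((μ (cylFull I)).toReal) ^ t) ≤
        c₂ * (Real.exp (-(n:ℝ) * P q) ^ t * sSum A M (q * t) n) := by
    intro n hn
    rw [hfilter n hn]
    constructor
    · have heq : c₁ * Kt⁻¹ * (Real.exp (-(n:ℝ) * P q) ^ t * sSum A M (q * t) n) =
          ∑ J ∈ admWords A n,
            c₁ * Kt⁻¹ * (Real.exp (-(n:ℝ) * P q) ^ t * sWord A M (q * t) J) := by
        simp only [sSum, Finset.mul_sum]
      rw [heq]
      refine Finset.sum_le_sum fun J hJm => ?_
      exact (hterm n hn J (Finset.mem_filter.mp hJm).2).1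
    · have heq : c₂ * (Real.exp (-(n:ℝ) * P q) ^ t * sSum A M (q * t) n) =
          ∑ J ∈ admWords A n,
            c₂ * (Real.exp (-(n:ℝ) * P q) ^ t * sWord A M (q * t) J) := by
        simp only [sSum, Finset.mul_sum]
      rw [heq]
      refine Finset.sum_le_sum fun J hJm => ?_
      exact (hterm n hn J (Finset.mem_filter.mp hJm).2).2
  -- limits
  have hm1 : (1:ℝ) < (m:ℝ) := by exact_mod_cast (by omega : 1 < m)
  have hlogm : 0 < Real.log m := Real.log_pos hm1
  have hden : ∀ n : ℕ, Real.log ((m : ℝ) ^ (-(n : ℝ))) = -(n:ℝ) * Real.log m :=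
    fun n => Real.log_rpow (by positivity) _
  -- generic limit of the comparison sequences
  have key : ∀ c : ℝ, Tendsto (fun n : ℕ =>
      (c + t * (-(n:ℝ) * P q) + Real.log (sSum A M (q * t) n)) / (-(n:ℝ) * Real.log m))
      atTop (𝓝 ((t * P q - P (q * t)) / Real.log m)) := by
    intro c
    have ha : Tendsto (fun n : ℕ => (-(n:ℝ) * Real.log m)⁻¹) atTop (𝓝 0) := by
      have heq : (fun n : ℕ => (-(n:ℝ) * Real.log m)⁻¹)
          = fun n : ℕ => -((n:ℝ)⁻¹ * (Real.log m)⁻¹) := by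
        funext n
        rw [neg_mul, inv_neg, mul_inv]
      rw [heq]
      simpa using (tendsto_inv_atTop_nhds_zero_nat.mul_const ((Real.log m)⁻¹)).neg
    have hb : Tendsto (fun n : ℕ => (1 / (n:ℝ)) * Real.log (sSum A M (q * t) n))
        atTop (𝓝 (P (q * t))) := hP (q * t)
    have hcomb : Tendsto (fun n : ℕ => c * (-(n:ℝ) * Real.log m)⁻¹ +
        (t * P q / Real.log m - (1 / (n:ℝ)) * Real.log (sSum A M (q * t) n) / Real.log m))
        atTop (𝓝 (c * 0 + (t * P q / Real.log m - P (q * t) / Real.log m))) :=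
      ((ha.const_mul c).add (tendsto_const_nhds.sub (hb.div_const _)))
    have hval : c * 0 + (t * P q / Real.log m - P (q * t) / Real.log m)
        = (t * P q - P (q * t)) / Real.log m := by
      rw [mul_zero, zero_add, ← sub_div]
    rw [hval] at hcomb
    apply hcomb.congr'
    filter_upwards [eventually_ge_atTop 1] with n hn
    have hn0 : (n:ℝ) ≠ 0 := by
      have : (0:ℝ) < n := by exact_mod_cast hn
      exact ne_of_gt this
    have hlm : Real.log m ≠ 0 := ne_of_gt hlogm
    field_simp
    ring
  -- squeeze
  have hQ : Tendsto (fun n : ℕ =>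
      Real.log (∑ I ∈ Finset.univ.filter (fun I : Fin n → Fin m => μ (cylFull I) ≠ 0),
        ((μ (cylFull I)).toReal) ^ t) / Real.log ((m : ℝ) ^ (-(n : ℝ))))
      atTop (𝓝 ((t * P q - P (q * t)) / Real.log m)) := by
    apply tendsto_of_tendsto_of_tendsto_of_le_of_le' (key (Real.log c₂)) (key (Real.log (c₁ * Kt⁻¹)))
    · filter_upwards [eventually_ge_atTop 1] with n hn
      obtain ⟨hlow, hup⟩ := hTbounds n hn
      have hd0 : -(n:ℝ) * Real.log m < 0 := by
        have h1 : (0:ℝ) < n := by exact_mod_cast hn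
        have := mul_pos h1 hlogm
        linarith
      have hTpos : 0 < ∑ I ∈ Finset.univ.filter (fun I : Fin n → Fin m => μ (cylFull I) ≠ 0),
          ((μ (cylFull I)).toReal) ^ t := by
        refine lt_of_lt_of_le ?_ hlow
        have := hWpos n hn
        positivity
      have hrhs : 0 < c₂ * (Real.exp (-(n:ℝ) * P q) ^ t * sSum A M (q * t) n) := by
        have := hWpos n hn
        positivity
      have hlog : Real.log (∑ I ∈ Finset.univ.filter
            (fun I : Fin n → Fin m => μ (cylFull I) ≠ 0), ((μ (cylFull I)).toReal) ^ t)
          ≤ Real.log c₂ + t * (-(n:ℝ) * P q) + Real.log (sSum A M (q * t) n) := by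
        have h1 := (Real.log_le_log_iff hTpos hrhs).mpr hup
        calc Real.log _ ≤ Real.log (c₂ * (Real.exp (-(n:ℝ) * P q) ^ t * sSum A M (q * t) n)) := h1
          _ = Real.log c₂ + t * (-(n:ℝ) * P q) + Real.log (sSum A M (q * t) n) := by
            rw [Real.log_mul (ne_of_gt hc₂) (ne_of_gt (mul_pos
              (Real.rpow_pos_of_pos (Real.exp_pos _) t) (hWpos n hn))), Real.log_mul
              (ne_of_gt (Real.rpow_pos_of_pos (Real.exp_pos _) t)) (ne_of_gt (hWpos n hn)),
              Real.log_rpow (Real.exp_pos _), Real.log_exp, add_assoc]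
      rw [hden n]
      exact div_le_div_of_nonpos_of_le hd0.le hlog
    · filter_upwards [eventually_ge_atTop 1] with n hn
      obtain ⟨hlow, hup⟩ := hTbounds n hn
      have hd0 : -(n:ℝ) * Real.log m < 0 := by
        have h1 : (0:ℝ) < n := by exact_mod_cast hn
        have := mul_pos h1 hlogm
        linarith
      have hTpos : 0 < ∑ I ∈ Finset.univ.filter (fun I : Fin n → Fin m => μ (cylFull I) ≠ 0),
          ((μ (cylFull I)).toReal) ^ t := by
        refine lt_of_lt_of_le ?_ hlow
        have := hWpos n hn
        positivity
      have hlhs : 0 < c₁ * Kt⁻¹ * (Real.exp (-(n:ℝ) * P q) ^ t * sSum A M (q * t) n) := by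
        have := hWpos n hn
        positivity
      have hlog : Real.log (c₁ * Kt⁻¹) + t * (-(n:ℝ) * P q) + Real.log (sSum A M (q * t) n)
          ≤ Real.log (∑ I ∈ Finset.univ.filter
            (fun I : Fin n → Fin m => μ (cylFull I) ≠ 0), ((μ (cylFull I)).toReal) ^ t) := by
        have h1 := (Real.log_le_log_iff hlhs hTpos).mpr hlow
        calc Real.log (c₁ * Kt⁻¹) + t * (-(n:ℝ) * P q) + Real.log (sSum A M (q * t) n)
            = Real.log (c₁ * Kt⁻¹ * (Real.exp (-(n:ℝ) * P q) ^ t * sSum A M (q * t) n)) := by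
              rw [Real.log_mul (ne_of_gt (mul_pos hc₁ (inv_pos.mpr hKt))) (ne_of_gt (mul_pos
                (Real.rpow_pos_of_pos (Real.exp_pos _) t) (hWpos n hn))), Real.log_mul
                (ne_of_gt (Real.rpow_pos_of_pos (Real.exp_pos _) t)) (ne_of_gt (hWpos n hn)),
                Real.log_rpow (Real.exp_pos _), Real.log_exp, add_assoc]
          _ ≤ _ := h1
      rw [hden n]
      exact div_le_div_of_nonpos_of_le hd0.le hlog
  simp only [Lspectrum]
  exact hQ.liminf_eq
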